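/- Let M be a left A-module with a flat connection ∇ with respect to the universal differential calculus. Define c̃: M⊗(A⊗A) → (A⊗A)⊗M by c̃(m⊗ω) = ω⊗m − Σ (m_A·ω)⊗m_M, where m_A·ω denotes multiplication of the first tensor factor of ω ∈ A⊗A by m_A on the left. Then for all m ∈ M and all ω, ω̃ ∈ Ω¹A := ker(μ: A⊗A → A), the following identity holds in (A⊗A)⊗(A⊗A)⊗M: (id ⊗ c̃)((c̃ ⊗ id)(m⊗ω⊗ω̃)) = ω⊗ω̃⊗m − Σ (m_A·ω)⊗ω̃⊗m_M. (This is the compatibility σ² = (id⊗σ¹)∘(σ¹⊗id) making M a flat differentiable bimodule.) -/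

import Mathlib

open TensorProduct

variable (K A M : Type*) [Field K] [Ring A] [Algebra K A]
  [AddCommGroup M] [Module K M] [Module A M] [IsScalarTower K A M]

/-- The action map `A ⊗ M → M`, `a ⊗ m ↦ a • m`. -/
noncomputable def actMap : A ⊗[K] M →ₗ[K] M :=
  TensorProduct.lift (LinearMap.mk₂ K (fun a m => a • m)
    (fun a b m => add_smul a b m)
    (fun k a m => smul_assoc k a m)
    (fun a m n => smul_add a m n)
    (fun k a m => (smul_comm k a m).symm))

/-- Left multiplication by `a : A` on a left `A`-module, as a `K`-linear map. -/
def lsmulMap (a : A) : M →ₗ[K] M where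
  toFun := fun m => a • m
  map_add' := fun x y => smul_add a x y
  map_smul' := fun k m => (smul_comm k a m).symm

/-- `a ↦ a • n` as a `K`-linear map `A → M`. -/
def smulBy (n : M) : A →ₗ[K] M where
  toFun := fun a => a • n
  map_add' := fun a b => add_smul a b n
  map_smul' := fun k a => smul_assoc k a n

/-- `D : M → A ⊗ M` is a connection with respect to the universal differential
calculus. -/
def IsConnection (D : M →ₗ[K] A ⊗[K] M) : Prop :=
  (∀ m : M, actMap K A M (D m) = 0) ∧
  ∀ (a : A) (m : M),
    D (a • m) = LinearMap.rTensor M (LinearMap.mulLeft K a) (D m)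
      + (1 : A) ⊗ₜ[K] (a • m) - a ⊗ₜ[K] m

/-- Flatness of a connection: `Σ 1 ⊗ m_A ⊗ m_M = Σ m_A ⊗ D(m_M)`. -/
def IsFlatConnection (D : M →ₗ[K] A ⊗[K] M) : Prop :=
  ∀ m : M, (1 : A) ⊗ₜ[K] (D m) = LinearMap.lTensor A D (D m)

/-- The induced right operation `m·a := a m − Σ m_A a m_M`. -/
noncomputable def rop (D : M →ₗ[K] A ⊗[K] M) (m : M) (a : A) : M :=
  a • m - actMap K A M (LinearMap.rTensor M (LinearMap.mulRight K a) (D m))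

variable (N : Type*) [AddCommGroup N] [Module K N] [Module A N] [IsScalarTower K A N]

/-- The map `N ⊗ A → N`, `n ⊗ a ↦ a • n`. -/
noncomputable def ract : N ⊗[K] A →ₗ[K] N :=
  TensorProduct.lift (LinearMap.mk₂ K (fun n a => a • n)
    (fun n₁ n₂ a => smul_add a n₁ n₂)
    (fun k n a => (smul_comm k a n).symm)
    (fun n a b => add_smul a b n)
    (fun k n a => smul_assoc k a n))

/-- The map `c̃ : M ⊗ N → N ⊗ M`, `m ⊗ n ↦ n ⊗ m − Σ (m_A • n) ⊗ m_M`, associated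
with a connection `D` on `M`. -/
noncomputable def ctMap (D : M →ₗ[K] A ⊗[K] M) : M ⊗[K] N →ₗ[K] N ⊗[K] M :=
  (LinearMap.id - (LinearMap.rTensor M (ract K A N)).comp
      (((TensorProduct.assoc K N A M).symm.toLinearMap).comp
        (LinearMap.lTensor N D))).comp
    (TensorProduct.comm K M N).toLinearMap

section Braiding

variable {K A N}
variable {V : Type*} [AddCommGroup V] [Module K V]

lemma rTensor_ract_assoc_symm_tmul (n : N) (u : A ⊗[K] V) :
    LinearMap.rTensor V (ract K A N) ((TensorProduct.assoc K N A V).symm (n ⊗ₜ[K] u))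
      = TensorProduct.map (smulBy K A N n) LinearMap.id u := by
  induction u using TensorProduct.induction_on with
  | zero => simp
  | tmul a x => rfl
  | add u v hu hv => simp only [tmul_add, map_add, hu, hv]

lemma ctMap_tmul (D : V →ₗ[K] A ⊗[K] V) (v : V) (n : N) :
    ctMap K A V N D (v ⊗ₜ[K] n)
      = n ⊗ₜ[K] v - TensorProduct.map (smulBy K A N n) LinearMap.id (D v) := by
  simp [ctMap, rTensor_ract_assoc_symm_tmul]

variable {N₁ N₂ : Type*} [AddCommGroup N₁] [Module K N₁] [Module A N₁] [IsScalarTower K A N₁]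
  [AddCommGroup N₂] [Module K N₂] [Module A N₂] [IsScalarTower K A N₂]

lemma lTensor_ctMap_assoc_map_smulBy_tmul (D : V →ₗ[K] A ⊗[K] V) (n₁ : N₁) (n₂ : N₂)
    (u : A ⊗[K] V) :
    LinearMap.lTensor N₁ (ctMap K A V N₂ D)
        (TensorProduct.assoc K N₁ V N₂
          (TensorProduct.map (smulBy K A N₁ n₁) LinearMap.id u ⊗ₜ[K] n₂))
      = TensorProduct.map (smulBy K A N₁ n₁) (TensorProduct.mk K N₂ V n₂) u
        - TensorProduct.map (smulBy K A N₁ n₁)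
            (TensorProduct.map (smulBy K A N₂ n₂) LinearMap.id) (LinearMap.lTensor A D u) := by
  induction u using TensorProduct.induction_on with
  | zero => simp
  | tmul a x =>
    simp only [map_tmul, LinearMap.id_apply, assoc_tmul, LinearMap.lTensor_tmul, mk_apply,
      ctMap_tmul, tmul_sub]
  | add u v hu hv =>
    simp only [map_add, add_tmul, hu, hv]
    abel

lemma map_smulBy_lTensor_of_isFlatConnection {D : V →ₗ[K] A ⊗[K] V}
    (hflat : IsFlatConnection K A V D) (v : V) (n₁ : N₁) (n₂ : N₂) :
    TensorProduct.map (smulBy K A N₁ n₁) (TensorProduct.map (smulBy K A N₂ n₂) LinearMap.id)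
        (LinearMap.lTensor A D (D v))
      = n₁ ⊗ₜ[K] TensorProduct.map (smulBy K A N₂ n₂) LinearMap.id (D v) := by
  rw [← hflat v, map_tmul]
  exact congrArg (· ⊗ₜ[K] _) (one_smul A n₁)

theorem lTensor_ctMap_assoc_ctMap_tmul_of_isFlatConnection {D : V →ₗ[K] A ⊗[K] V}
    (hflat : IsFlatConnection K A V D) (v : V) (n₁ : N₁) (n₂ : N₂) :
    LinearMap.lTensor N₁ (ctMap K A V N₂ D)
        (TensorProduct.assoc K N₁ V N₂ (ctMap K A V N₁ D (v ⊗ₜ[K] n₁) ⊗ₜ[K] n₂))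
      = n₁ ⊗ₜ[K] (n₂ ⊗ₜ[K] v)
        - TensorProduct.map (smulBy K A N₁ n₁) (TensorProduct.mk K N₂ V n₂) (D v) := by
  -- By flatness `Σ v_A n₁ ⊗ (v_V)_A n₂ ⊗ (v_V)_V = Σ n₁ ⊗ v_A n₂ ⊗ v_V`,
  -- which cancels the correction term of `n₁ ⊗ c̃(v ⊗ n₂)`.
  rw [ctMap_tmul, sub_tmul, map_sub, map_sub, lTensor_ctMap_assoc_map_smulBy_tmul,
    map_smulBy_lTensor_of_isFlatConnection hflat, assoc_tmul, LinearMap.lTensor_tmul,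
    ctMap_tmul, tmul_sub]
  abel

end Braiding

theorem ctMap_square_on_one_forms (D : M →ₗ[K] A ⊗[K] M)
    (hflat : IsFlatConnection K A M D)
    (m : M) (ω ω' : A ⊗[K] A) :
    LinearMap.lTensor (A ⊗[K] A) (ctMap K A M (A ⊗[K] A) D)
        ((TensorProduct.assoc K (A ⊗[K] A) M (A ⊗[K] A))
          ((ctMap K A M (A ⊗[K] A) D (m ⊗ₜ[K] ω)) ⊗ₜ[K] ω'))
      = ω ⊗ₜ[K] (ω' ⊗ₜ[K] m)
        - TensorProduct.map (smulBy K A (A ⊗[K] A) ω)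
            (TensorProduct.mk K (A ⊗[K] A) M ω') (D m) :=
  lTensor_ctMap_assoc_ctMap_tmul_of_isFlatConnection hflat m ω ω'
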